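/- arXiv:2204.07821 — 3 statements merged into one kernel-verified Lean document; each statement's English description precedes it below -/
import Mathlib

section
/- Let f be a bounded probability density on ℝ^D and define RDAD(x; f, m) = sqrt((1/m) ∫₀^m F_x^{−1}(q)² dq), where F_x(r) = P(f(X)^{1/D} d(X,x) ≤ r). Then RDAD(·; f, m) is Lipschitz with constant ‖f‖_∞^{1/D}. -/
/-!
The weight `φ ξ = f ξ ^ (1/D)` is at most `L = (sup f) ^ (1/D)`, so the triangle inequality gives
`φ ξ * d(ξ, x) ≤ φ ξ * d(ξ, y) + L * d(x, y)`. Hence `F_y t ≤ F_x (t + L d(x, y))`, and the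
quantiles satisfy `F_x⁻¹ ≤ F_y⁻¹ + L d(x, y)` on `(0, m]`. Minkowski's inequality in `L²(0, m)`
turns this pointwise shift into `RDAD x ≤ RDAD y + L d(x, y)`.
-/

open MeasureTheory Set

/-- The measure induced by the density `f`. -/
noncomputable def densMeasure {D : ℕ} (f : EuclideanSpace ℝ (Fin D) → ℝ) :
    Measure (EuclideanSpace ℝ (Fin D)) :=
  volume.withDensity fun ξ => ENNReal.ofReal (f ξ)

/-- `F_x(r) = P(f(X)^{1/D} d(X,x) ≤ r)`. -/
noncomputable def Fcdf {D : ℕ} (f : EuclideanSpace ℝ (Fin D) → ℝ)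
    (x : EuclideanSpace ℝ (Fin D)) (r : ℝ) : ℝ :=
  (densMeasure f {ξ | f ξ ^ ((1 : ℝ) / D) * dist ξ x ≤ r}).toReal

/-- Generalized inverse `F_x^{-1}(q) = inf {t : F_x(t) ≥ q}`. -/
noncomputable def Fquantile {D : ℕ} (f : EuclideanSpace ℝ (Fin D) → ℝ)
    (x : EuclideanSpace ℝ (Fin D)) (q : ℝ) : ℝ :=
  sInf {t : ℝ | q ≤ Fcdf f x t}

/-- `RDAD(x; f, m) = sqrt((1/m) ∫₀^m F_x^{-1}(q)² dq)`. -/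
noncomputable def RDAD {D : ℕ} (f : EuclideanSpace ℝ (Fin D) → ℝ)
    (x : EuclideanSpace ℝ (Fin D)) (m : ℝ) : ℝ :=
  Real.sqrt ((1 / m) * ∫ q in (0 : ℝ)..m, (Fquantile f x q) ^ 2)

section L2

variable {α : Type*} [MeasurableSpace α] {μ : Measure α}

lemma MeasureTheory.MemLp.eLpNorm_two_eq_ofReal_sqrt {g : α → ℝ} (hg : MemLp g 2 μ) :
    eLpNorm g 2 μ = ENNReal.ofReal √(∫ a, g a ^ 2 ∂μ) := by
  rw [hg.eLpNorm_eq_integral_rpow_norm two_ne_zero ENNReal.ofNat_ne_top, Real.sqrt_eq_rpow]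
  simp

lemma sqrt_integral_sq_le_add_of_le [IsFiniteMeasure μ] {g h : α → ℝ} {c : ℝ} (hc : 0 ≤ c)
    (hg : MemLp g 2 μ) (hh : MemLp h 2 μ) (hg0 : 0 ≤ᵐ[μ] g) (hgh : ∀ᵐ a ∂μ, g a ≤ h a + c) :
    √(∫ a, g a ^ 2 ∂μ) ≤ √(∫ a, h a ^ 2 ∂μ) + c * √(μ.real univ) := by
  have hconst : MemLp (fun _ => c) 2 μ := memLp_const c
  have hL2 : eLpNorm g 2 μ ≤ eLpNorm h 2 μ + eLpNorm (fun _ => c) 2 μ :=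
    calc eLpNorm g 2 μ ≤ eLpNorm (h + fun _ => c) 2 μ := by
          refine eLpNorm_mono_ae_real ?_
          filter_upwards [hg0, hgh] with a ha0 ha
          simpa [abs_of_nonneg ha0] using ha
      _ ≤ _ := eLpNorm_add_le hh.1 hconst.1 one_le_two
  rw [hg.eLpNorm_two_eq_ofReal_sqrt, hh.eLpNorm_two_eq_ofReal_sqrt,
    hconst.eLpNorm_two_eq_ofReal_sqrt, ← ENNReal.ofReal_add (by positivity) (by positivity),
    ENNReal.ofReal_le_ofReal_iff (by positivity)] at hL2
  simpa [Real.sqrt_mul', Real.sqrt_sq hc, mul_comm] using hL2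

end L2

open Filter Topology

lemma csInf_setOf_le_le_add {F G : ℝ → ℝ} {q c : ℝ} (hGF : ∀ t, G t ≤ F (t + c))
    (hF : BddBelow {t | q ≤ F t}) (hG : {t | q ≤ G t}.Nonempty) :
    sInf {t | q ≤ F t} ≤ sInf {t | q ≤ G t} + c := by
  rw [← sub_le_iff_le_add]
  exact le_csInf hG fun t ht => sub_le_iff_le_add.2 (csInf_le hF (ht.trans (hGF t)))

section Quantile

variable {D : ℕ} {f : EuclideanSpace ℝ (Fin D) → ℝ}

lemma Fcdf_eq_zero_of_neg (hf0 : ∀ ξ, 0 ≤ f ξ) (x : EuclideanSpace ℝ (Fin D)) {t : ℝ}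
    (ht : t < 0) : Fcdf f x t = 0 := by
  have : {ξ | f ξ ^ ((1 : ℝ) / D) * dist ξ x ≤ t} = ∅ :=
    eq_empty_of_forall_notMem fun ξ hξ =>
      (ht.trans_le (mul_nonneg (Real.rpow_nonneg (hf0 ξ) _) dist_nonneg)).not_ge hξ
  rw [Fcdf, this, measure_empty, ENNReal.toReal_zero]

lemma tendsto_Fcdf_atTop (hprob : IsProbabilityMeasure (densMeasure f))
    (x : EuclideanSpace ℝ (Fin D)) : Tendsto (Fcdf f x) atTop (𝓝 1) := by
  have hmono : Monotone fun t : ℝ => {ξ | f ξ ^ ((1 : ℝ) / D) * dist ξ x ≤ t} :=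
    fun _ _ hst _ hξ => le_trans hξ hst
  have hunion : ⋃ t : ℝ, {ξ | f ξ ^ ((1 : ℝ) / D) * dist ξ x ≤ t} = univ :=
    eq_univ_of_forall fun ξ => mem_iUnion.2 ⟨_, le_refl (f ξ ^ ((1 : ℝ) / D) * dist ξ x)⟩
  have := tendsto_measure_iUnion_atTop (μ := densMeasure f) hmono
  rw [hunion, measure_univ] at this
  exact (ENNReal.tendsto_toReal ENNReal.one_ne_top).comp this

-- For `q ≤ 0` the defining set is all of `ℝ`, and `sInf` of an unbounded set is the junk value `0`.
lemma Fquantile_of_nonpos (x : EuclideanSpace ℝ (Fin D)) {q : ℝ} (hq : q ≤ 0) :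
    Fquantile f x q = 0 := by
  have : {t | q ≤ Fcdf f x t} = univ :=
    eq_univ_of_forall fun _ => hq.trans ENNReal.toReal_nonneg
  rw [Fquantile, this, Real.sInf_of_not_bddBelow not_bddBelow_univ]

lemma bddBelow_setOf_le_Fcdf (hf0 : ∀ ξ, 0 ≤ f ξ) (x : EuclideanSpace ℝ (Fin D)) {q : ℝ}
    (hq : 0 < q) : BddBelow {t | q ≤ Fcdf f x t} :=
  ⟨0, fun _ ht => not_lt.1 fun htneg => hq.not_ge (Fcdf_eq_zero_of_neg hf0 x htneg ▸ ht)⟩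

lemma nonempty_setOf_le_Fcdf (hprob : IsProbabilityMeasure (densMeasure f))
    (x : EuclideanSpace ℝ (Fin D)) {q : ℝ} (hq : q < 1) : {t | q ≤ Fcdf f x t}.Nonempty :=
  ((tendsto_Fcdf_atTop hprob x).eventually_const_le hq).exists

lemma Fquantile_nonneg (hf0 : ∀ ξ, 0 ≤ f ξ) (x : EuclideanSpace ℝ (Fin D)) (q : ℝ) :
    0 ≤ Fquantile f x q := by
  rcases le_or_gt q 0 with hq | hq
  · exact (Fquantile_of_nonpos x hq).ge
  · exact Real.sInf_nonneg fun t ht =>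
      not_lt.1 fun htneg => hq.not_ge (Fcdf_eq_zero_of_neg hf0 x htneg ▸ ht)

lemma Fquantile_monotoneOn (hf0 : ∀ ξ, 0 ≤ f ξ) (hprob : IsProbabilityMeasure (densMeasure f))
    (x : EuclideanSpace ℝ (Fin D)) : MonotoneOn (Fquantile f x) (Iio 1) := by
  intro q _ q' hq' hqq'
  rcases le_or_gt q 0 with hq | hq
  · exact (Fquantile_of_nonpos x hq).trans_le (Fquantile_nonneg hf0 x q')
  · exact csInf_le_csInf (bddBelow_setOf_le_Fcdf hf0 x hq) (nonempty_setOf_le_Fcdf hprob x hq')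
      fun t ht => hqq'.trans ht

lemma Fcdf_le_Fcdf_add_dist (hf0 : ∀ ξ, 0 ≤ f ξ) (hbdd : BddAbove (range f))
    [IsFiniteMeasure (densMeasure f)] (x y : EuclideanSpace ℝ (Fin D)) (t : ℝ) :
    Fcdf f y t ≤ Fcdf f x (t + sSup (range f) ^ ((1 : ℝ) / D) * dist x y) := by
  refine ENNReal.toReal_mono (measure_ne_top _ _) (measure_mono fun ξ hξ => ?_)
  have hweight : f ξ ^ ((1 : ℝ) / D) ≤ sSup (range f) ^ ((1 : ℝ) / D) :=
    Real.rpow_le_rpow (hf0 ξ) (le_csSup hbdd ⟨ξ, rfl⟩) (by positivity : (0 : ℝ) ≤ 1 / D)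
  calc f ξ ^ ((1 : ℝ) / D) * dist ξ x
      ≤ f ξ ^ ((1 : ℝ) / D) * dist ξ y + f ξ ^ ((1 : ℝ) / D) * dist y x := by
        rw [← mul_add]
        exact mul_le_mul_of_nonneg_left (dist_triangle _ _ _) (Real.rpow_nonneg (hf0 ξ) _)
    _ ≤ t + sSup (range f) ^ ((1 : ℝ) / D) * dist x y := by
        rw [dist_comm y x]
        exact add_le_add hξ (by gcongr)

lemma Fquantile_le_Fquantile_add_dist (hf0 : ∀ ξ, 0 ≤ f ξ) (hbdd : BddAbove (range f))
    (hprob : IsProbabilityMeasure (densMeasure f)) (x y : EuclideanSpace ℝ (Fin D)) {q : ℝ}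
    (hq : q ∈ Ioo 0 1) :
    Fquantile f x q ≤ Fquantile f y q + sSup (range f) ^ ((1 : ℝ) / D) * dist x y :=
  csInf_setOf_le_le_add (Fcdf_le_Fcdf_add_dist hf0 hbdd x y) (bddBelow_setOf_le_Fcdf hf0 x hq.1)
    (nonempty_setOf_le_Fcdf hprob y hq.2)

end Quantile

lemma RDAD_le_RDAD_add_dist {D : ℕ} {f : EuclideanSpace ℝ (Fin D) → ℝ} (hf0 : ∀ ξ, 0 ≤ f ξ)
    (hbdd : BddAbove (range f)) (hprob : IsProbabilityMeasure (densMeasure f)) {m : ℝ}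
    (hm : m ∈ Ioo 0 1) (x y : EuclideanSpace ℝ (Fin D)) :
    RDAD f x m ≤ RDAD f y m + sSup (range f) ^ ((1 : ℝ) / D) * dist x y := by
  set c := sSup (range f) ^ ((1 : ℝ) / D) * dist x y
  set μ := volume.restrict (Ioc 0 m)
  have hm0 : 0 < m := hm.1
  have hc : 0 ≤ c :=
    mul_nonneg (Real.rpow_nonneg ((hf0 x).trans (le_csSup hbdd ⟨x, rfl⟩)) _) dist_nonneg
  have hmemLp (z : EuclideanSpace ℝ (Fin D)) : MemLp (Fquantile f z) 2 μ :=
    (((Fquantile_monotoneOn hf0 hprob z).mono fun _ hq => hq.2.trans_lt hm.2).memLp_isCompact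
      isCompact_Icc).mono_measure (Measure.restrict_mono Ioc_subset_Icc_self le_rfl)
  have hle : ∀ᵐ q ∂μ, Fquantile f x q ≤ Fquantile f y q + c :=
    (ae_restrict_iff' measurableSet_Ioc).2 <| ae_of_all _ fun q hq =>
      Fquantile_le_Fquantile_add_dist hf0 hbdd hprob x y ⟨hq.1, hq.2.trans_lt hm.2⟩
  have hμ : μ.real univ = m := by simp [μ, hm0.le]
  have hL2 := sqrt_integral_sq_le_add_of_le hc (hmemLp x) (hmemLp y)
    (ae_of_all _ (Fquantile_nonneg hf0 x)) hle
  rw [hμ] at hL2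
  have hscale : √(1 / m) * √m = 1 := by
    rw [← Real.sqrt_mul (one_div_pos.2 hm0).le, one_div_mul_cancel hm0.ne', Real.sqrt_one]
  simp only [RDAD, intervalIntegral.integral_of_le hm0.le, Real.sqrt_mul (one_div_pos.2 hm0).le]
  calc √(1 / m) * √(∫ q in Ioc 0 m, Fquantile f x q ^ 2)
      ≤ √(1 / m) * (√(∫ q in Ioc 0 m, Fquantile f y q ^ 2) + c * √m) :=
        mul_le_mul_of_nonneg_left hL2 (Real.sqrt_nonneg _)
    _ = √(1 / m) * √(∫ q in Ioc 0 m, Fquantile f y q ^ 2) + c := by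
        rw [mul_add, mul_left_comm, hscale, mul_one]

theorem RDAD_lipschitz_bounded_general {D : ℕ}
    (f : EuclideanSpace ℝ (Fin D) → ℝ) (hf0 : ∀ ξ, 0 ≤ f ξ)
    (hbdd : BddAbove (Set.range f))
    (hprob : IsProbabilityMeasure (densMeasure f))
    (m : ℝ) (hm : m ∈ Set.Ioo (0 : ℝ) 1) :
    ∀ x y : EuclideanSpace ℝ (Fin D),
      |RDAD f x m - RDAD f y m| ≤ (sSup (Set.range f)) ^ ((1 : ℝ) / D) * dist x y := by
  intro x y
  have hxy := RDAD_le_RDAD_add_dist hf0 hbdd hprob hm x y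
  have hyx := RDAD_le_RDAD_add_dist hf0 hbdd hprob hm y x
  rw [dist_comm y x] at hyx
  exact abs_sub_le_iff.2 ⟨by linarith, by linarith⟩

/-- For a bounded density `f`, `RDAD(·; f, m)` is Lipschitz with constant `‖f‖_∞^{1/D}`. -/
theorem RDAD_lipschitz_bounded {D : ℕ} (hD : 0 < D)
    (f : EuclideanSpace ℝ (Fin D) → ℝ) (hf : Measurable f) (hf0 : ∀ ξ, 0 ≤ f ξ)
    (hbdd : BddAbove (Set.range f))
    (hprob : IsProbabilityMeasure (densMeasure f))
    (m : ℝ) (hm : m ∈ Set.Ioo (0 : ℝ) 1) :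
    ∀ x y : EuclideanSpace ℝ (Fin D),
      |RDAD f x m - RDAD f y m| ≤ (sSup (Set.range f)) ^ ((1 : ℝ) / D) * dist x y :=
  RDAD_lipschitz_bounded_general f hf0 hbdd hprob m hm
end

section
/- (Scale invariance, population version) Let X be a random vector in ℝ^D with density f, a > 0, b ∈ ℝ^D, and let f̃ be the density of X̃ = aX + b. Then for every x ∈ ℝ^D and m ∈ (0,1), RDAD(ax + b; f̃, m) = RDAD(x; f, m). -/
open MeasureTheory Set

/-- Key auxiliary lemma: the CDF `F` is scale invariant. -/
theorem Fcdf_scale_invariance' {D : ℕ} (hD : 0 < D)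
    (f : EuclideanSpace ℝ (Fin D) → ℝ) (hf : Measurable f) (hf0 : ∀ ξ, 0 ≤ f ξ)
    (a : ℝ) (ha : 0 < a) (b : EuclideanSpace ℝ (Fin D))
    (ftilde : EuclideanSpace ℝ (Fin D) → ℝ)
    (hftilde : ∀ y, ftilde y = a ^ (-(D : ℝ)) * f (a⁻¹ • (y - b)))
    (x : EuclideanSpace ℝ (Fin D)) (r : ℝ) :
    Fcdf ftilde (a • x + b) r = Fcdf f x r := by
  have haD : (0:ℝ) < a ^ D := pow_pos ha D
  have hDne : (D:ℝ) ≠ 0 := Nat.cast_ne_zero.2 hD.ne'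
  have hfte : ftilde = fun y => a ^ (-(D : ℝ)) * f (a⁻¹ • (y - b)) := funext hftilde
  have hmft : Measurable ftilde := by rw [hfte]; fun_prop
  set T : EuclideanSpace ℝ (Fin D) → EuclideanSpace ℝ (Fin D) := fun ξ => a • ξ + b with hT
  have hTm : Measurable T := by fun_prop
  have hval : ∀ ξ, ftilde (T ξ) = a ^ (-(D : ℝ)) * f ξ := by
    intro ξ
    rw [hftilde]
    congr 1
    simp [hT, add_sub_cancel_right, smul_smul, inv_mul_cancel₀ ha.ne']
  have hrp : (a ^ (-(D:ℝ))) ^ ((1:ℝ)/D) = a⁻¹ := by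
    rw [← Real.rpow_mul ha.le, neg_mul, mul_one_div, div_self hDne, Real.rpow_neg_one]
  have haDval : a ^ (-(D:ℝ)) = (a ^ D)⁻¹ := by
    rw [Real.rpow_neg ha.le, Real.rpow_natCast]
  set Sb : Set (EuclideanSpace ℝ (Fin D)) :=
    {η | ftilde η ^ ((1 : ℝ) / D) * dist η (a • x + b) ≤ r} with hSb
  set S : Set (EuclideanSpace ℝ (Fin D)) :=
    {ξ | f ξ ^ ((1 : ℝ) / D) * dist ξ x ≤ r} with hS
  have hSbm : MeasurableSet Sb := by
    have : Measurable fun η => ftilde η ^ ((1:ℝ)/D) * dist η (a • x + b) := by fun_prop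
    exact measurableSet_le this measurable_const
  have hSm : MeasurableSet S := by
    have : Measurable fun ξ => f ξ ^ ((1:ℝ)/D) * dist ξ x := by fun_prop
    exact measurableSet_le this measurable_const
  have hpre : T ⁻¹' Sb = S := by
    ext ξ
    simp only [mem_preimage, hSb, hS, mem_setOf_eq]
    rw [hval ξ]
    have hd : dist (T ξ) (a • x + b) = a * dist ξ x := by
      simp only [hT]
      rw [dist_add_right, dist_smul₀, Real.norm_eq_abs, abs_of_pos ha]
    rw [hd, Real.mul_rpow (Real.rpow_nonneg ha.le _) (hf0 ξ), hrp]
    constructor <;> intro h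
    · calc f ξ ^ ((1:ℝ)/D) * dist ξ x
          = a⁻¹ * f ξ ^ ((1:ℝ)/D) * (a * dist ξ x) := by
            field_simp
        _ ≤ r := h
    · calc a⁻¹ * f ξ ^ ((1:ℝ)/D) * (a * dist ξ x)
          = f ξ ^ ((1:ℝ)/D) * dist ξ x := by field_simp
        _ ≤ r := h
  have hmap : Measure.map T (volume : Measure (EuclideanSpace ℝ (Fin D)))
      = ENNReal.ofReal ((a ^ D)⁻¹) • volume := by
    have h1 : T = (fun η => η + b) ∘ (fun ξ => a • ξ) := by funext ξ; rfl
    rw [h1, ← Measure.map_map (by fun_prop) (by fun_prop),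
      Measure.map_addHaar_smul (volume : Measure (EuclideanSpace ℝ (Fin D))) ha.ne',
      Measure.map_smul, map_add_right_eq_self, finrank_euclideanSpace_fin,
      abs_inv, abs_of_pos haD]
  have key : densMeasure ftilde Sb = densMeasure f S := by
    have h1 : densMeasure ftilde Sb = ∫⁻ η in Sb, ENNReal.ofReal (ftilde η) ∂volume :=
      withDensity_apply _ hSbm
    have h2 : densMeasure f S = ∫⁻ ξ in S, ENNReal.ofReal (f ξ) ∂volume :=
      withDensity_apply _ hSm
    have h3 : ∫⁻ η in Sb, ENNReal.ofReal (ftilde η) ∂(Measure.map T volume)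
        = ∫⁻ ξ in T ⁻¹' Sb, ENNReal.ofReal (ftilde (T ξ)) ∂volume :=
      setLIntegral_map hSbm (by fun_prop) hTm
    rw [hmap] at h3
    have h4 : ∫⁻ η in Sb, ENNReal.ofReal (ftilde η)
          ∂((ENNReal.ofReal ((a ^ D)⁻¹)) • (volume : Measure (EuclideanSpace ℝ (Fin D))))
        = ENNReal.ofReal ((a ^ D)⁻¹) * ∫⁻ η in Sb, ENNReal.ofReal (ftilde η) ∂volume := by
      rw [Measure.restrict_smul, lintegral_smul_measure, smul_eq_mul]
    have h5 : ∫⁻ ξ in T ⁻¹' Sb, ENNReal.ofReal (ftilde (T ξ)) ∂volume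
        = ENNReal.ofReal ((a ^ D)⁻¹) * ∫⁻ ξ in S, ENNReal.ofReal (f ξ) ∂volume := by
      rw [hpre]
      calc ∫⁻ ξ in S, ENNReal.ofReal (ftilde (T ξ)) ∂volume
          = ∫⁻ ξ in S, ENNReal.ofReal ((a ^ D)⁻¹) * ENNReal.ofReal (f ξ) ∂volume := by
            apply lintegral_congr
            intro ξ
            rw [hval ξ, haDval, ENNReal.ofReal_mul (by positivity)]
        _ = ENNReal.ofReal ((a ^ D)⁻¹) * ∫⁻ ξ in S, ENNReal.ofReal (f ξ) ∂volume := by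
            rw [lintegral_const_mul _ (by fun_prop)]
    rw [h4, h5] at h3
    have hc0 : ENNReal.ofReal ((a ^ D)⁻¹) ≠ 0 := by
      positivity
    have hct : ENNReal.ofReal ((a ^ D)⁻¹) ≠ ⊤ := ENNReal.ofReal_ne_top
    rw [h1, h2]
    exact (ENNReal.mul_right_inj hc0 hct).1 h3
  unfold Fcdf
  rw [← hSb, ← hS, key]

/-- Scale invariance of RDAD (population version): if `X̃ = aX + b` has density
`f̃(y) = a^{-D} f((y-b)/a)`, then `RDAD(ax + b; f̃, m) = RDAD(x; f, m)`. -/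
theorem RDAD_scale_invariance {D : ℕ} (hD : 0 < D)
    (f : EuclideanSpace ℝ (Fin D) → ℝ) (hf : Measurable f) (hf0 : ∀ ξ, 0 ≤ f ξ)
    (hprob : IsProbabilityMeasure (densMeasure f))
    (a : ℝ) (ha : 0 < a) (b : EuclideanSpace ℝ (Fin D))
    (ftilde : EuclideanSpace ℝ (Fin D) → ℝ)
    (hftilde : ∀ y, ftilde y = a ^ (-(D : ℝ)) * f (a⁻¹ • (y - b)))
    (m : ℝ) (hm : m ∈ Set.Ioo (0 : ℝ) 1) (x : EuclideanSpace ℝ (Fin D)) :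
    RDAD ftilde (a • x + b) m = RDAD f x m := by
  have hF : ∀ r, Fcdf ftilde (a • x + b) r = Fcdf f x r :=
    Fcdf_scale_invariance' hD f hf hf0 a ha b ftilde hftilde x
  have hQ : ∀ q, Fquantile ftilde (a • x + b) q = Fquantile f x q := by
    intro q
    unfold Fquantile
    congr 1
    ext t
    simp only [mem_setOf_eq, hF t]
  unfold RDAD
  congr 1
  congr 1
  apply intervalIntegral.integral_congr
  intro q _
  simp only [hQ q]
end

section
/- (Lower bound half of the interleaving theorem) Suppose P(ℝ^D \ ⋃_i Ω_i) ≤ m/2, where each Ω_i is a subset on which f ≥ t_i. Let g(y) = min_i t_i^{1/D} d(y, Ω_i). Then for every y ∈ ℝ^D, RDAD(y; f, m) ≥ g(y)/√2. -/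
/-!
Write `φ(ξ) = f(ξ)^{1/D} d(ξ, y)` and `g = min_i t_i^{1/D} d(y, Ω_i)`. On `Ω_i` we have
`φ ≥ t_i^{1/D} d(y, Ω_i) ≥ g`, so for `r < g` the sublevel set `{φ ≤ r}` misses `⋃ Ω_i` and
`F_y(r) ≤ m/2`. Hence the quantile `F_y^{-1}(q)` is at least `g` for every `q ∈ (m/2, m)`; as the
quantile is monotone and nonnegative, `∫₀^m (F_y^{-1})² ≥ (m/2) g²`, i.e. `RDAD(y)² ≥ g²/2`.
-/

open MeasureTheory Set

open Metric

/-- `Fquantile f x` is `lowerQuantile (Fcdf f x)` by definition. For `q ≤ 0` the set is usually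
`univ`, whose `sInf` is the junk value `0`. -/
noncomputable def lowerQuantile (F : ℝ → ℝ) (q : ℝ) : ℝ :=
  sInf {t | q ≤ F t}

section LowerQuantile

variable {F : ℝ → ℝ} {q b : ℝ}

lemma lowerQuantile_of_nonpos (hF0 : ∀ t, 0 ≤ F t) (hq : q ≤ 0) : lowerQuantile F q = 0 := by
  have : {t | q ≤ F t} = univ := eq_univ_of_forall fun t => hq.trans (hF0 t)
  rw [lowerQuantile, this, Real.sInf_univ]

lemma le_lowerQuantile (hex : ∃ t, q ≤ F t) (hb : ∀ t < b, F t < q) : b ≤ lowerQuantile F q :=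
  le_csInf hex fun _ ht => not_lt.mp fun htb => (hb _ htb).not_ge ht

variable (hF0 : ∀ t, 0 ≤ F t) (hFneg : ∀ t < 0, F t = 0) (hF1 : ∀ q < 1, ∃ t, q ≤ F t)
include hF0 hFneg hF1

lemma lowerQuantile_nonneg (hq : q < 1) : 0 ≤ lowerQuantile F q := by
  rcases le_or_gt q 0 with hq0 | hq0
  · exact (lowerQuantile_of_nonpos hF0 hq0).ge
  · exact le_lowerQuantile (hF1 q hq) fun t ht => (hFneg t ht).trans_lt hq0

lemma monotoneOn_lowerQuantile : MonotoneOn (lowerQuantile F) (Iio 1) := by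
  intro a _ b hb hab
  rcases le_or_gt a 0 with ha0 | ha0
  · rw [lowerQuantile_of_nonpos hF0 ha0]
    exact lowerQuantile_nonneg hF0 hFneg hF1 hb
  · have hbdd : BddBelow {t | a ≤ F t} :=
      ⟨0, fun t (ht : a ≤ F t) => not_lt.mp fun ht0 => (hFneg t ht0 ▸ ht).not_gt ha0⟩
    exact csInf_le_csInf hbdd (hF1 b hb) fun t ht => hab.trans ht

end LowerQuantile

lemma exists_le_measure_sublevel_toReal {X : Type*} [MeasurableSpace X] (μ : Measure X)
    [IsProbabilityMeasure μ] (φ : X → ℝ) {q : ℝ} (hq : q < 1) :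
    ∃ r : ℝ, q ≤ (μ {x | φ x ≤ r}).toReal := by
  have hmono : Monotone fun n : ℕ => {x | φ x ≤ n} :=
    fun a b hab x (hx : φ x ≤ a) => hx.trans (Nat.cast_le.mpr hab)
  have hunion : ⋃ n : ℕ, {x | φ x ≤ n} = univ :=
    eq_univ_of_forall fun x => mem_iUnion.mpr ⟨⌈φ x⌉₊, Nat.le_ceil (φ x)⟩
  have htend := tendsto_measure_iUnion_atTop (μ := μ) hmono
  rw [hunion, measure_univ] at htend
  have hlt : ENNReal.ofReal q < 1 := by
    rcases le_or_gt q 0 with h | h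
    · simp [ENNReal.ofReal_eq_zero.mpr h]
    · exact ENNReal.ofReal_lt_one.mpr hq
  obtain ⟨n, hn⟩ := (htend.eventually_const_lt hlt).exists
  exact ⟨n, (ENNReal.ofReal_le_iff_le_toReal (measure_ne_top _ _)).mp hn.le⟩

lemma rpow_mul_infDist_le_of_mem {X : Type*} [PseudoMetricSpace X] {s : Set X} {ξ : X} (y : X)
    {a b p : ℝ} (ha : 0 ≤ a) (hab : a ≤ b) (hp : 0 ≤ p) (hξ : ξ ∈ s) :
    a ^ p * infDist y s ≤ b ^ p * dist ξ y :=
  mul_le_mul (Real.rpow_le_rpow ha hab hp) (dist_comm ξ y ▸ infDist_le_dist_of_mem hξ)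
    infDist_nonneg (Real.rpow_nonneg (ha.trans hab) p)

lemma iInf_rpow_mul_infDist_le {X ι : Type*} [PseudoMetricSpace X] {Ω : ι → Set X}
    {t : ι → ℝ} {f : X → ℝ} {p : ℝ} (hp : 0 ≤ p) (ht : ∀ i, 0 ≤ t i)
    (hft : ∀ i, ∀ x ∈ Ω i, t i ≤ f x) (y : X) {ξ : X} (hξ : ξ ∈ ⋃ i, Ω i) :
    ⨅ i, t i ^ p * infDist y (Ω i) ≤ f ξ ^ p * dist ξ y := by
  obtain ⟨i, hi⟩ := mem_iUnion.mp hξ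
  have hbdd : BddBelow (range fun i => t i ^ p * infDist y (Ω i)) :=
    ⟨0, forall_mem_range.mpr fun i => mul_nonneg (Real.rpow_nonneg (ht i) p) infDist_nonneg⟩
  exact (ciInf_le hbdd i).trans (rpow_mul_infDist_le_of_mem y (ht i) (hft i ξ hi) hp hi)

lemma mul_le_integral_of_monotoneOn {h : ℝ → ℝ} {a b c : ℝ} (ha : 0 ≤ a) (hab : a ≤ b)
    (hmono : MonotoneOn h (Icc 0 b)) (h0 : 0 ≤ h 0) (hc : ∀ q ∈ Ioo a b, c ≤ h q) :
    (b - a) * c ≤ ∫ q in 0..b, h q := by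
  have hint : IntervalIntegrable h volume 0 b := by
    rw [← uIcc_of_le (ha.trans hab)] at hmono
    exact hmono.intervalIntegrable
  have hint₁ : IntervalIntegrable h volume 0 a :=
    hint.mono_set (uIcc_subset_uIcc left_mem_uIcc (mem_uIcc_of_le ha hab))
  have hint₂ : IntervalIntegrable h volume a b :=
    hint.mono_set (uIcc_subset_uIcc (mem_uIcc_of_le ha hab) right_mem_uIcc)
  have hlow : 0 ≤ ∫ q in 0..a, h q :=
    intervalIntegral.integral_nonneg ha fun q hq =>
      h0.trans (hmono ⟨le_rfl, ha.trans hab⟩ ⟨hq.1, hq.2.trans hab⟩ hq.1)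
  have hhigh : (b - a) * c ≤ ∫ q in a..b, h q := by
    simpa using intervalIntegral.integral_mono_on_of_le_Ioo hab intervalIntegrable_const hint₂ hc
  rw [← intervalIntegral.integral_add_adjacent_intervals hint₁ hint₂]
  linarith

section Fquantile

variable {D : ℕ} {f : EuclideanSpace ℝ (Fin D) → ℝ} (y : EuclideanSpace ℝ (Fin D))

lemma Fcdf_of_neg (hf0 : ∀ ξ, 0 ≤ f ξ) {r : ℝ} (hr : r < 0) : Fcdf f y r = 0 := by
  have : {ξ | f ξ ^ ((1 : ℝ) / D) * dist ξ y ≤ r} = ∅ :=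
    eq_empty_of_forall_notMem fun ξ hξ =>
      (hξ.trans_lt hr).not_ge (mul_nonneg (Real.rpow_nonneg (hf0 ξ) _) dist_nonneg)
  rw [Fcdf, this, measure_empty, ENNReal.toReal_zero]

variable [IsProbabilityMeasure (densMeasure f)]

lemma exists_le_Fcdf {q : ℝ} (hq : q < 1) : ∃ r, q ≤ Fcdf f y r :=
  exists_le_measure_sublevel_toReal _ _ hq

lemma iInf_le_Fquantile {ι : Type*} {Ω : ι → Set (EuclideanSpace ℝ (Fin D))} {t : ι → ℝ}
    (ht : ∀ i, 0 ≤ t i) (hft : ∀ i, ∀ x ∈ Ω i, t i ≤ f x) {s q : ℝ} (hs : 0 ≤ s)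
    (hmass : densMeasure f (univ \ ⋃ i, Ω i) ≤ ENNReal.ofReal s) (hsq : s < q) (hq : q < 1) :
    ⨅ i, t i ^ ((1 : ℝ) / D) * infDist y (Ω i) ≤ Fquantile f y q := by
  refine le_lowerQuantile (exists_le_Fcdf y hq) fun r hr => ?_
  have hsub : {ξ | f ξ ^ ((1 : ℝ) / D) * dist ξ y ≤ r} ⊆ univ \ ⋃ i, Ω i :=
    fun ξ hξ => ⟨mem_univ ξ, fun hmem =>
      (hξ.trans_lt hr).not_ge (iInf_rpow_mul_infDist_le (by positivity) ht hft y hmem)⟩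
  exact (ENNReal.toReal_le_of_le_ofReal hs ((measure_mono hsub).trans hmass)).trans_lt hsq

variable (hf0 : ∀ ξ, 0 ≤ f ξ)
include hf0

lemma Fquantile_nonneg_s17 {q : ℝ} (hq : q < 1) : 0 ≤ Fquantile f y q :=
  lowerQuantile_nonneg (fun _ => ENNReal.toReal_nonneg) (fun _ => Fcdf_of_neg y hf0)
    (fun _ => exists_le_Fcdf y) hq

lemma monotoneOn_Fquantile : MonotoneOn (Fquantile f y) (Iio 1) :=
  monotoneOn_lowerQuantile (fun _ => ENNReal.toReal_nonneg) (fun _ => Fcdf_of_neg y hf0)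
    fun _ => exists_le_Fcdf y

end Fquantile

theorem RDAD_lower_bound_general {D k : ℕ}
    (f : EuclideanSpace ℝ (Fin D) → ℝ) (hf0 : ∀ ξ, 0 ≤ f ξ)
    (hprob : IsProbabilityMeasure (densMeasure f))
    (Ω : Fin k → Set (EuclideanSpace ℝ (Fin D)))
    (t : Fin k → ℝ) (ht : ∀ i, 0 < t i)
    (hft : ∀ i, ∀ x ∈ Ω i, t i ≤ f x)
    (m : ℝ) (hm : m ∈ Set.Ioo (0 : ℝ) 1)
    (hmass : densMeasure f (Set.univ \ ⋃ i, Ω i) ≤ ENNReal.ofReal (m / 2)) :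
    ∀ y : EuclideanSpace ℝ (Fin D),
      (⨅ i, t i ^ ((1 : ℝ) / D) * Metric.infDist y (Ω i)) / Real.sqrt 2 ≤ RDAD f y m := by
  intro y
  obtain ⟨hm0, hm1⟩ := hm
  set g := ⨅ i, t i ^ ((1 : ℝ) / D) * infDist y (Ω i)
  have hg0 : 0 ≤ g :=
    Real.iInf_nonneg fun i => mul_nonneg (Real.rpow_nonneg (ht i).le _) infDist_nonneg
  have hQ : ∀ q ∈ Ioo (m / 2) m, g ^ 2 ≤ Fquantile f y q ^ 2 := fun q hq =>
    pow_le_pow_left₀ hg0 (iInf_le_Fquantile y (fun i => (ht i).le) hft (by positivity) hmass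
      hq.1 (hq.2.trans hm1)) 2
  have hQ2 : MonotoneOn (fun q => Fquantile f y q ^ 2) (Icc 0 m) := fun a ha b hb hab =>
    pow_le_pow_left₀ (Fquantile_nonneg_s17 y hf0 (ha.2.trans_lt hm1))
      (monotoneOn_Fquantile y hf0 (ha.2.trans_lt hm1) (hb.2.trans_lt hm1) hab) 2
  have hintegral : (m - m / 2) * g ^ 2 ≤ ∫ q in 0..m, Fquantile f y q ^ 2 :=
    mul_le_integral_of_monotoneOn (by positivity) (by linarith) hQ2 (sq_nonneg _) hQ
  calc g / √2 = √(g ^ 2 / 2) := by rw [Real.sqrt_div (sq_nonneg g), Real.sqrt_sq hg0]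
    _ = √(1 / m * ((m - m / 2) * g ^ 2)) := by congr 1; field_simp; ring
    _ ≤ RDAD f y m := Real.sqrt_le_sqrt (by gcongr)

/-- Lower bound half of the interleaving theorem: if `P(ℝ^D \ ⋃ Ω_i) ≤ m/2` where `f ≥ t_i`
on each `Ω_i`, then `RDAD(y; f, m) ≥ g(y)/√2` with `g(y) = min_i t_i^{1/D} d(y, Ω_i)`. -/
theorem RDAD_lower_bound {D k : ℕ} (hD : 0 < D) (hk : 0 < k)
    (f : EuclideanSpace ℝ (Fin D) → ℝ) (hf : Measurable f) (hf0 : ∀ ξ, 0 ≤ f ξ)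
    (hprob : IsProbabilityMeasure (densMeasure f))
    (Ω : Fin k → Set (EuclideanSpace ℝ (Fin D)))
    (hne : ∀ i, (Ω i).Nonempty)
    (hdisj : Pairwise fun i j => Disjoint (Ω i) (Ω j))
    (t : Fin k → ℝ) (ht : ∀ i, 0 < t i)
    (hft : ∀ i, ∀ x ∈ Ω i, t i ≤ f x)
    (m : ℝ) (hm : m ∈ Set.Ioo (0 : ℝ) 1)
    (hmass : densMeasure f (Set.univ \ ⋃ i, Ω i) ≤ ENNReal.ofReal (m / 2)) :
    ∀ y : EuclideanSpace ℝ (Fin D),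
      (⨅ i, t i ^ ((1 : ℝ) / D) * Metric.infDist y (Ω i)) / Real.sqrt 2 ≤ RDAD f y m :=
  RDAD_lower_bound_general f hf0 hprob Ω t ht hft m hm hmass
end
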